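/- For every n ≥ 1 and every subset I ⊆ [n], the entry B'_n(I, [n] \ I) of the matrix B'_n = U_n B_n V_n equals π'_n(I). -/
import Mathlib


open Finset Polynomial
open scoped Classical

namespace AR

/-- `binVal I = r_n(I) - 1 = Σ_{i ∈ I} 2^(i-1)`. -/
def binVal (I : Finset ℕ) : ℕ := ∑ i ∈ I, 2 ^ (i - 1)

lemma binVal_Icc (m : ℕ) : binVal (Finset.Icc 1 m) = 2 ^ m - 1 := by
  induction m with
  | zero => simp [binVal]
  | succ k ih =>
      rw [binVal, Finset.sum_Icc_succ_top (by omega)]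
      rw [binVal] at ih
      rw [ih]
      have h1 : 1 ≤ 2 ^ k := Nat.one_le_two_pow
      simp only [Nat.add_sub_cancel, pow_succ]
      omega

lemma binVal_lt {n : ℕ} {I : Finset ℕ} (h : I ⊆ Finset.Icc 1 n) : binVal I < 2 ^ n := by
  have h1 : binVal I ≤ binVal (Finset.Icc 1 n) :=
    Finset.sum_le_sum_of_subset h
  have h2 := binVal_Icc n
  have h3 : 1 ≤ 2 ^ n := Nat.one_le_two_pow
  omega

/-- The row/column index (zero-based, i.e. `r_n(I) - 1`) corresponding to a subset `I ⊆ [n]`. -/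
def idx (n : ℕ) (I : Finset ℕ) (h : I ⊆ Finset.Icc 1 n) : Fin (2 ^ n) :=
  ⟨binVal I, binVal_lt h⟩

def blockEquiv (n : ℕ) : Fin (2 ^ n) ⊕ Fin (2 ^ n) ≃ Fin (2 ^ (n + 1)) :=
  finSumFinEquiv.trans (finCongr (by rw [pow_succ, mul_two]))

/-- The pair of Adin–Roichman matrices `(A_n, B_n)`, defined recursively. -/
def ABpair : (n : ℕ) → Matrix (Fin (2 ^ n)) (Fin (2 ^ n)) ℤ × Matrix (Fin (2 ^ n)) (Fin (2 ^ n)) ℤ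
  | 0 => (Matrix.of fun _ _ => 1, Matrix.of fun _ _ => 1)
  | n + 1 =>
      let p := ABpair n
      ((Matrix.reindex (blockEquiv n) (blockEquiv n)) (Matrix.fromBlocks p.1 p.1 p.1 (-p.2)),
       (Matrix.reindex (blockEquiv n) (blockEquiv n)) (Matrix.fromBlocks p.1 p.1 0 (-p.2)))

def A (n : ℕ) : Matrix (Fin (2 ^ n)) (Fin (2 ^ n)) ℤ := (ABpair n).1

def B (n : ℕ) : Matrix (Fin (2 ^ n)) (Fin (2 ^ n)) ℤ := (ABpair n).2

/-- `R` is a (nonempty) integer interval. -/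
def IsInterval (R : Finset ℕ) : Prop := ∃ a b : ℕ, R = Finset.Icc a b

/-- `R` is a run of `I`: a maximal nonempty interval contained in `I`. -/
def IsRun (I R : Finset ℕ) : Prop :=
  R.Nonempty ∧ IsInterval R ∧ R ⊆ I ∧
    ∀ S : Finset ℕ, IsInterval S → S ⊆ I → R ⊆ S → S = R

/-- `R` is a prefix of `S` : `min R = min S` and `R ⊆ S`. -/
def IsPrefixOf (R S : Finset ℕ) : Prop := R.min = S.min ∧ R ⊆ S

/-- `I ≫ J` : every run of `I ∩ J` is a prefix of a run of `I`. -/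
def Gg (I J : Finset ℕ) : Prop :=
  ∀ R : Finset ℕ, IsRun (I ∩ J) R → ∃ S : Finset ℕ, IsRun I S ∧ IsPrefixOf R S

/-- The set of runs of `I`. -/
noncomputable def runs (I : Finset ℕ) : Finset (Finset ℕ) :=
  I.powerset.filter (fun R => IsRun I R)

/-- `π(I)`: the product of (size + 1) over the runs of `I`. -/
noncomputable def piFun (I : Finset ℕ) : ℕ := ∏ R ∈ runs I, (R.card + 1)

/-- `π'_n(I)`: the product of (size + 1) over the runs of `I` not containing `n`. -/
noncomputable def piFun' (n : ℕ) (I : Finset ℕ) : ℕ :=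
  ∏ R ∈ (runs I).filter (fun R => n ∉ R), (R.card + 1)

/-- The subset of `[n]` encoded by a zero-based index `i : Fin (2^n)` (binary digits). -/
def decode (n : ℕ) (i : Fin (2 ^ n)) : Finset ℕ :=
  (Finset.Icc 1 n).filter (fun k => Nat.testBit i.val (k - 1))

/-- The matrix `U_n`, with `U_n(I,J) = 1` if `I ⊇ J` and `0` otherwise. -/
def U (n : ℕ) : Matrix (Fin (2 ^ n)) (Fin (2 ^ n)) ℤ :=
  Matrix.of fun i j => if decode n j ⊆ decode n i then 1 else 0

/-- The matrix `V_n = U_n⁻¹`, with `V_n(I,J) = (-1)^{|I \ J|}` if `I ⊇ J` and `0` otherwise. -/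
def V (n : ℕ) : Matrix (Fin (2 ^ n)) (Fin (2 ^ n)) ℤ :=
  Matrix.of fun i j =>
    if decode n j ⊆ decode n i then (-1) ^ ((decode n i) \ (decode n j)).card else 0

def A' (n : ℕ) : Matrix (Fin (2 ^ n)) (Fin (2 ^ n)) ℤ := U n * A n * V n

def B' (n : ℕ) : Matrix (Fin (2 ^ n)) (Fin (2 ^ n)) ℤ := U n * B n * V n

/-- `E ⪯ I` : `E ⊆ I`, `E` contains no minimal element of a run of `I`,
and `E` contains no two consecutive integers. -/
def SubPrec (E I : Finset ℕ) : Prop :=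
  E ⊆ I ∧ (∀ R : Finset ℕ, (h : IsRun I R) → R.min' h.1 ∉ E) ∧
    ∀ i : ℕ, ¬ (i ∈ E ∧ i + 1 ∈ E)

/-- `I ⇝ J` : `J = ([n] \ I) ∪ E` for some `E ⪯ I`. -/
def Step (n : ℕ) (I J : Finset ℕ) : Prop :=
  ∃ E : Finset ℕ, SubPrec E I ∧ J = (Finset.Icc 1 n \ I) ∪ E

/-- `π_μ` for a composition `μ` of `n`. -/
def piComp {n : ℕ} (μ : Composition n) : ℕ := (μ.blocks.map (· + 1)).prod

/-- `π'_μ` for a composition `μ` of `n`. -/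
def piComp' {n : ℕ} (μ : Composition n) : ℕ := (μ.blocks.dropLast.map (· + 1)).prod

/-- The Thue–Morse sequence: `thueMorse m = s₂(m) % 2`. -/
def thueMorse (m : ℕ) : ℕ := (Nat.digits 2 m).sum % 2
section Sec1
variable {n : ℕ}

lemma blockEquiv_inl_val (i : Fin (2 ^ n)) : ((blockEquiv n) (Sum.inl i) : Fin (2 ^ (n+1))).val = i.val := by
  simp [blockEquiv]

lemma blockEquiv_inr_val (i : Fin (2 ^ n)) : ((blockEquiv n) (Sum.inr i) : Fin (2 ^ (n+1))).val = 2 ^ n + i.val := by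
  simp [blockEquiv, Nat.add_comm]

lemma decode_subset (i : Fin (2 ^ n)) : decode n i ⊆ Finset.Icc 1 n := Finset.filter_subset _ _

lemma notMem_decode (i : Fin (2 ^ n)) : n + 1 ∉ decode n i := by
  intro h
  have := decode_subset i h
  simp [Finset.mem_Icc] at this

lemma decode_inl (i : Fin (2 ^ n)) :
    decode (n + 1) ((blockEquiv n) (Sum.inl i)) = decode n i := by
  ext x
  simp only [decode, Finset.mem_filter, Finset.mem_Icc, blockEquiv_inl_val]
  constructor
  · rintro ⟨⟨h1, h2⟩, h3⟩
    refine ⟨⟨h1, ?_⟩, h3⟩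
    rcases Nat.lt_or_ge x (n + 1) with h | h
    · omega
    · have hx : x = n + 1 := by omega
      subst hx
      rw [show n + 1 - 1 = n by omega] at h3
      rw [Nat.testBit_lt_two_pow i.isLt] at h3
      exact absurd h3 (by simp)
  · rintro ⟨⟨h1, h2⟩, h3⟩
    exact ⟨⟨h1, by omega⟩, h3⟩

lemma decode_inr (i : Fin (2 ^ n)) :
    decode (n + 1) ((blockEquiv n) (Sum.inr i)) = insert (n + 1) (decode n i) := by
  ext x
  simp only [decode, Finset.mem_filter, Finset.mem_Icc, blockEquiv_inr_val, Finset.mem_insert]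
  constructor
  · rintro ⟨⟨h1, h2⟩, h3⟩
    by_cases hx : x = n + 1
    · exact Or.inl hx
    · refine Or.inr ⟨⟨h1, by omega⟩, ?_⟩
      rwa [Nat.testBit_two_pow_add_gt (by omega)] at h3
  · rintro (hx | ⟨⟨h1, h2⟩, h3⟩)
    · subst hx
      refine ⟨⟨by omega, le_refl _⟩, ?_⟩
      rw [show n + 1 - 1 = n by omega, Nat.testBit_two_pow_add_eq,
        Nat.testBit_lt_two_pow i.isLt]
      simp
    · refine ⟨⟨h1, by omega⟩, ?_⟩
      rwa [Nat.testBit_two_pow_add_gt (by omega)]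

lemma erase_subset_Icc {I : Finset ℕ} (h : I ⊆ Finset.Icc 1 (n + 1)) :
    I.erase (n + 1) ⊆ Finset.Icc 1 n := by
  intro x hx
  rw [Finset.mem_erase] at hx
  have := h hx.2
  rw [Finset.mem_Icc] at *
  omega

lemma subset_Icc_of_not_mem {I : Finset ℕ} (h : I ⊆ Finset.Icc 1 (n + 1)) (hn : n + 1 ∉ I) :
    I ⊆ Finset.Icc 1 n := by
  intro x hx
  have := h hx
  rw [Finset.mem_Icc] at *
  have : x ≠ n + 1 := fun he => hn (he ▸ hx)
  omega

lemma idx_congr {I J : Finset ℕ} (h : I = J) (hI : I ⊆ Finset.Icc 1 n) (hJ : J ⊆ Finset.Icc 1 n) :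
    idx n I hI = idx n J hJ := by subst h; rfl

lemma idx_inl {I : Finset ℕ} (hI : I ⊆ Finset.Icc 1 (n + 1)) (hI' : I ⊆ Finset.Icc 1 n) :
    idx (n + 1) I hI = (blockEquiv n) (Sum.inl (idx n I hI')) := by
  apply Fin.ext
  rw [blockEquiv_inl_val]
  rfl

lemma idx_inr {I : Finset ℕ} (hI : I ⊆ Finset.Icc 1 (n + 1)) (hmem : n + 1 ∈ I) :
    idx (n + 1) I hI = (blockEquiv n) (Sum.inr (idx n (I.erase (n + 1)) (erase_subset_Icc hI))) := by
  apply Fin.ext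
  rw [blockEquiv_inr_val]
  show binVal I = 2 ^ n + binVal (I.erase (n + 1))
  have : I = insert (n + 1) (I.erase (n + 1)) := (Finset.insert_erase hmem).symm
  conv_lhs => rw [this]
  rw [binVal, Finset.sum_insert (Finset.notMem_erase _ _)]
  simp [binVal]

end Sec1
section Sec2
variable {n : ℕ}

lemma insert_sdiff_insert_decode (a b : Fin (2 ^ n)) :
    insert (n + 1) (decode n a) \ insert (n + 1) (decode n b) = decode n a \ decode n b := by
  ext x
  simp only [Finset.mem_sdiff, Finset.mem_insert, not_or]
  constructor
  · rintro ⟨hx1 | hx1, hx2, hx3⟩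
    · exact absurd hx1 hx2
    · exact ⟨hx1, hx3⟩
  · rintro ⟨hx1, hx2⟩
    exact ⟨Or.inr hx1, fun he => notMem_decode a (he ▸ hx1), hx2⟩

lemma U_succ (n : ℕ) : U (n + 1) =
    (Matrix.reindex (blockEquiv n) (blockEquiv n))
      (Matrix.fromBlocks (U n) 0 (U n) (U n)) := by
  ext i j
  obtain ⟨s, rfl⟩ := (blockEquiv n).surjective i
  obtain ⟨t, rfl⟩ := (blockEquiv n).surjective j
  rw [Matrix.reindex_apply, Matrix.submatrix_apply, Equiv.symm_apply_apply, Equiv.symm_apply_apply]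
  cases s with
  | inl a =>
    cases t with
    | inl b => simp [U, decode_inl]
    | inr b =>
      simp only [U, Matrix.of_apply, decode_inl, decode_inr, Matrix.fromBlocks_apply₁₂,
        Matrix.zero_apply]
      rw [if_neg]
      intro h
      exact notMem_decode a (h (Finset.mem_insert_self _ _))
  | inr a =>
    cases t with
    | inl b =>
      simp only [U, Matrix.of_apply, decode_inl, decode_inr, Matrix.fromBlocks_apply₂₁]
      by_cases h : decode n b ⊆ decode n a
      · rw [if_pos (h.trans (Finset.subset_insert _ _)), if_pos h]
      · rw [if_neg (fun hc => h ((Finset.subset_insert_iff_of_notMem (notMem_decode b)).1 hc)),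
          if_neg h]
    | inr b =>
      simp only [U, Matrix.of_apply, decode_inr, decode_inr, Matrix.fromBlocks_apply₂₂]
      by_cases h : decode n b ⊆ decode n a
      · rw [if_pos (Finset.insert_subset_insert _ h), if_pos h]
      · rw [if_neg (fun hc => h ((Finset.insert_subset_insert_iff (notMem_decode b)).1 hc)),
          if_neg h]

lemma V_succ (n : ℕ) : V (n + 1) =
    (Matrix.reindex (blockEquiv n) (blockEquiv n))
      (Matrix.fromBlocks (V n) 0 (-(V n)) (V n)) := by
  ext i j
  obtain ⟨s, rfl⟩ := (blockEquiv n).surjective i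
  obtain ⟨t, rfl⟩ := (blockEquiv n).surjective j
  rw [Matrix.reindex_apply, Matrix.submatrix_apply, Equiv.symm_apply_apply, Equiv.symm_apply_apply]
  cases s with
  | inl a =>
    cases t with
    | inl b => simp [V, decode_inl]
    | inr b =>
      simp only [V, Matrix.of_apply, decode_inl, decode_inr, Matrix.fromBlocks_apply₁₂,
        Matrix.zero_apply]
      rw [if_neg]
      intro h
      exact notMem_decode a (h (Finset.mem_insert_self _ _))
  | inr a =>
    cases t with
    | inl b =>
      simp only [V, Matrix.of_apply, decode_inl, decode_inr, Matrix.fromBlocks_apply₂₁,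
        Matrix.neg_apply]
      by_cases h : decode n b ⊆ decode n a
      · rw [if_pos (h.trans (Finset.subset_insert _ _)), if_pos h]
        have hins : insert (n + 1) (decode n a) \ decode n b
            = insert (n + 1) (decode n a \ decode n b) :=
          Finset.insert_sdiff_of_notMem _ (notMem_decode b)
        rw [hins, Finset.card_insert_of_notMem (by
          intro hc
          exact notMem_decode a (Finset.mem_sdiff.1 hc).1)]
        rw [pow_succ]
        ring
      · rw [if_neg (fun hc => h ((Finset.subset_insert_iff_of_notMem (notMem_decode b)).1 hc)),
          if_neg h, neg_zero]
    | inr b =>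
      simp only [V, Matrix.of_apply, decode_inr, decode_inr, Matrix.fromBlocks_apply₂₂]
      by_cases h : decode n b ⊆ decode n a
      · rw [if_pos (Finset.insert_subset_insert _ h), if_pos h,
          insert_sdiff_insert_decode]
      · rw [if_neg (fun hc => h ((Finset.insert_subset_insert_iff (notMem_decode b)).1 hc)),
          if_neg h]

end Sec2
section Sec3

lemma reindex_mul {n : ℕ} (M N : Matrix (Fin (2^n) ⊕ Fin (2^n)) (Fin (2^n) ⊕ Fin (2^n)) ℤ) :
    (Matrix.reindex (blockEquiv n) (blockEquiv n)) M * (Matrix.reindex (blockEquiv n) (blockEquiv n)) N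
      = (Matrix.reindex (blockEquiv n) (blockEquiv n)) (M * N) := by
  simp only [Matrix.reindex_apply]
  exact Matrix.submatrix_mul_equiv M N _ (blockEquiv n).symm _

lemma fromBlocks_congr {α : Type*} {l m o p : Type*}
    {A A' : Matrix l m α} {B B' : Matrix l p α} {C C' : Matrix o m α} {D D' : Matrix o p α}
    (h1 : A = A') (h2 : B = B') (h3 : C = C') (h4 : D = D') :
    Matrix.fromBlocks A B C D = Matrix.fromBlocks A' B' C' D' := by
  rw [h1, h2, h3, h4]

lemma A_succ (n : ℕ) : A (n + 1) =
    (Matrix.reindex (blockEquiv n) (blockEquiv n))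
      (Matrix.fromBlocks (A n) (A n) (A n) (-(B n))) := rfl

lemma B_succ (n : ℕ) : B (n + 1) =
    (Matrix.reindex (blockEquiv n) (blockEquiv n))
      (Matrix.fromBlocks (A n) (A n) 0 (-(B n))) := rfl

lemma Ap_succ (n : ℕ) : A' (n + 1) =
    (Matrix.reindex (blockEquiv n) (blockEquiv n))
      (Matrix.fromBlocks 0 (A' n) (A' n + B' n) (A' n - B' n)) := by
  rw [A', U_succ, A_succ, V_succ, reindex_mul, reindex_mul,
    Matrix.fromBlocks_multiply, Matrix.fromBlocks_multiply]
  congr 1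
  unfold A' B'
  exact fromBlocks_congr (by noncomm_ring) (by noncomm_ring) (by noncomm_ring) (by noncomm_ring)

lemma Bp_succ (n : ℕ) : B' (n + 1) =
    (Matrix.reindex (blockEquiv n) (blockEquiv n))
      (Matrix.fromBlocks 0 (A' n) (B' n) (A' n - B' n)) := by
  rw [B', U_succ, B_succ, V_succ, reindex_mul, reindex_mul,
    Matrix.fromBlocks_multiply, Matrix.fromBlocks_multiply]
  congr 1
  unfold A' B'
  exact fromBlocks_congr (by noncomm_ring) (by noncomm_ring) (by noncomm_ring) (by noncomm_ring)

end Sec3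
section Sec4

lemma mem_runs {I R : Finset ℕ} : R ∈ runs I ↔ IsRun I R := by
  rw [runs, Finset.mem_filter, Finset.mem_powerset]
  exact ⟨fun h => h.2, fun h => ⟨h.2.2.1, h⟩⟩

lemma isRun_iff {I R : Finset ℕ} (h0 : 0 ∉ I) :
    IsRun I R ↔ ∃ a b : ℕ, 1 ≤ a ∧ a ≤ b ∧ R = Finset.Icc a b ∧ Finset.Icc a b ⊆ I ∧
      (a - 1) ∉ I ∧ (b + 1) ∉ I := by
  constructor
  · rintro ⟨hne, ⟨a, b, rfl⟩, hsub, hmax⟩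
    have hab : a ≤ b := by
      rcases hne with ⟨x, hx⟩
      rw [Finset.mem_Icc] at hx
      omega
    have ha1 : 1 ≤ a := by
      by_contra h
      have : a = 0 := by omega
      exact h0 (hsub (by rw [Finset.mem_Icc]; omega))
    refine ⟨a, b, ha1, hab, rfl, hsub, ?_, ?_⟩
    · intro hmem
      have hsub' : Finset.Icc (a - 1) b ⊆ I := by
        intro x hx
        rw [Finset.mem_Icc] at hx
        by_cases hxa : x = a - 1
        · exact hxa ▸ hmem
        · exact hsub (by rw [Finset.mem_Icc]; omega)
      have := hmax _ ⟨a - 1, b, rfl⟩ hsub' (by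
        intro x hx
        rw [Finset.mem_Icc] at *
        omega)
      have : a - 1 ∈ Finset.Icc a b := this ▸ (by rw [Finset.mem_Icc]; omega)
      rw [Finset.mem_Icc] at this
      omega
    · intro hmem
      have hsub' : Finset.Icc a (b + 1) ⊆ I := by
        intro x hx
        rw [Finset.mem_Icc] at hx
        by_cases hxb : x = b + 1
        · exact hxb ▸ hmem
        · exact hsub (by rw [Finset.mem_Icc]; omega)
      have := hmax _ ⟨a, b + 1, rfl⟩ hsub' (by
        intro x hx
        rw [Finset.mem_Icc] at *
        omega)
      have : b + 1 ∈ Finset.Icc a b := this ▸ (by rw [Finset.mem_Icc]; omega)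
      rw [Finset.mem_Icc] at this
      omega
  · rintro ⟨a, b, ha1, hab, rfl, hsub, hma, hmb⟩
    refine ⟨Finset.nonempty_Icc.2 hab, ⟨a, b, rfl⟩, hsub, ?_⟩
    rintro S ⟨c, d, rfl⟩ hSI hRS
    have hca : c ≤ a ∧ b ≤ d := by
      constructor
      · have := hRS (Finset.mem_Icc.2 ⟨le_refl a, hab⟩)
        rw [Finset.mem_Icc] at this; exact this.1
      · have := hRS (Finset.mem_Icc.2 ⟨hab, le_refl b⟩)
        rw [Finset.mem_Icc] at this; exact this.2
    have hc : c = a := by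
      by_contra h
      have hlt : c < a := by omega
      exact hma (hSI (Finset.mem_Icc.2 ⟨by omega, by omega⟩))
    have hd : d = b := by
      by_contra h
      have hlt : b < d := by omega
      exact hmb (hSI (Finset.mem_Icc.2 ⟨by omega, by omega⟩))
    rw [hc, hd]

lemma zero_notMem_of_subset_Icc {n : ℕ} {I : Finset ℕ} (hI : I ⊆ Finset.Icc 1 n) : 0 ∉ I := by
  intro h
  have := hI h
  rw [Finset.mem_Icc] at this
  omega

/-- Uniqueness of the left endpoint of a run ending at `n`. -/
lemma run_left_unique {I : Finset ℕ} {n a a' : ℕ} (ha1 : 1 ≤ a) (ha1' : 1 ≤ a')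
    (han : a ≤ n) (han' : a' ≤ n)
    (ha : Finset.Icc a n ⊆ I) (ha' : Finset.Icc a' n ⊆ I)
    (hma : a - 1 ∉ I) (hma' : a' - 1 ∉ I) : a = a' := by
  by_contra h
  rcases Nat.lt_or_ge a a' with hlt | hge
  · exact hma' (ha (Finset.mem_Icc.2 ⟨by omega, by omega⟩))
  · have hlt : a' < a := by omega
    exact hma (ha' (Finset.mem_Icc.2 ⟨by omega, by omega⟩))

/-- If `n ∈ I ⊆ [1,n]`, there is a (unique) run of `I` of the form `Icc a n`. -/
lemma exists_top_run {n : ℕ} {I : Finset ℕ} (hI : I ⊆ Finset.Icc 1 n) (hn : n ∈ I) :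
    ∃ a : ℕ, 1 ≤ a ∧ a ≤ n ∧ Finset.Icc a n ⊆ I ∧ (a - 1) ∉ I ∧ IsRun I (Finset.Icc a n) := by
  have hn1 : 1 ≤ n := by
    have := hI hn; rw [Finset.mem_Icc] at this; exact this.1
  have hP : ∃ a, 1 ≤ a ∧ Finset.Icc a n ⊆ I := by
    refine ⟨n, hn1, ?_⟩
    intro x hx
    rw [Finset.mem_Icc] at hx
    have : x = n := by omega
    exact this ▸ hn
  classical
  let a := Nat.find hP
  have haP : 1 ≤ a ∧ Finset.Icc a n ⊆ I := Nat.find_spec hP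
  have han : a ≤ n := Nat.find_le ⟨hn1, by
    intro x hx
    rw [Finset.mem_Icc] at hx
    have : x = n := by omega
    exact this ▸ hn⟩
  have hma : a - 1 ∉ I := by
    intro hmem
    have ha2 : 2 ≤ a := by
      by_contra h
      have : a = 1 := by omega
      rw [this] at hmem
      exact zero_notMem_of_subset_Icc hI (by simpa using hmem)
    have : 1 ≤ a - 1 ∧ Finset.Icc (a - 1) n ⊆ I := by
      refine ⟨by omega, ?_⟩
      intro x hx
      rw [Finset.mem_Icc] at hx
      by_cases hxa : x = a - 1
      · exact hxa ▸ hmem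
      · exact haP.2 (Finset.mem_Icc.2 ⟨by omega, hx.2⟩)
    exact Nat.find_min hP (by omega : a - 1 < a) this
  refine ⟨a, haP.1, han, haP.2, hma, ?_⟩
  rw [isRun_iff (zero_notMem_of_subset_Icc hI)]
  refine ⟨a, n, haP.1, han, rfl, haP.2, hma, ?_⟩
  intro hc
  have := hI hc
  rw [Finset.mem_Icc] at this
  omega

/-- Any run of `I ⊆ [1,n]` containing `n` equals `Icc a n`. -/
lemma run_top_eq {n a : ℕ} {I R : Finset ℕ} (hI : I ⊆ Finset.Icc 1 n)
    (ha1 : 1 ≤ a) (han : a ≤ n) (haI : Finset.Icc a n ⊆ I) (hma : a - 1 ∉ I)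
    (hR : IsRun I R) (hnR : n ∈ R) : R = Finset.Icc a n := by
  rw [isRun_iff (zero_notMem_of_subset_Icc hI)] at hR
  obtain ⟨c, d, hc1, hcd, rfl, hsub, hmc, hmd⟩ := hR
  rw [Finset.mem_Icc] at hnR
  have hd : d = n := by
    have := hI (hsub (Finset.mem_Icc.2 ⟨hcd, le_refl d⟩))
    rw [Finset.mem_Icc] at this
    omega
  subst hd
  have := run_left_unique hc1 ha1 hcd han hsub haI hmc hma
  rw [this]

end Sec4
section Sec5

lemma run_subset {I R : Finset ℕ} (h : R ∈ runs I) : R ⊆ I := (mem_runs.1 h).2.2.1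

lemma filter_runs_of_notMem {I : Finset ℕ} {x : ℕ} (hx : x ∉ I) :
    (runs I).filter (fun R => x ∉ R) = runs I := by
  apply Finset.filter_true_of_mem
  intro R hR hc
  exact hx (run_subset hR hc)

lemma piFun'_of_notMem {I : Finset ℕ} {x : ℕ} (hx : x ∉ I) : piFun' x I = piFun I := by
  rw [piFun', piFun, filter_runs_of_notMem hx]

/-- Case `n ∉ I`: runs of `insert (n+1) I`. -/
lemma runs_insert_of_notMem {n : ℕ} {I : Finset ℕ} (hI : I ⊆ Finset.Icc 1 n) (hn : n ∉ I) :
    runs (insert (n + 1) I) = insert {n + 1} (runs I) := by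
  have h0 : 0 ∉ I := zero_notMem_of_subset_Icc hI
  have h0' : (0 : ℕ) ∉ insert (n + 1) I := by
    simp only [Finset.mem_insert, not_or]
    exact ⟨by omega, h0⟩
  have hn1I : n + 1 ∉ I := fun h => by
    have := hI h; rw [Finset.mem_Icc] at this; omega
  ext R
  rw [mem_runs, Finset.mem_insert, mem_runs, isRun_iff h0', isRun_iff h0]
  constructor
  · rintro ⟨a, b, ha1, hab, rfl, hsub, hma, hmb⟩
    by_cases hb : b = n + 1
    · subst hb
      have ha : a = n + 1 := by
        by_contra h
        have : n ∈ Finset.Icc a (n + 1) := Finset.mem_Icc.2 ⟨by omega, by omega⟩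
        have := hsub this
        rw [Finset.mem_insert] at this
        rcases this with h' | h'
        · omega
        · exact hn h'
      subst ha
      left
      rw [Finset.Icc_self]
    · right
      have hbn : b ≤ n := by
        have := hsub (Finset.mem_Icc.2 ⟨hab, le_refl b⟩)
        rw [Finset.mem_insert] at this
        rcases this with h' | h'
        · omega
        · have := hI h'; rw [Finset.mem_Icc] at this; omega
      refine ⟨a, b, ha1, hab, rfl, ?_, ?_, ?_⟩
      · intro x hx
        have hx' := hsub hx
        rw [Finset.mem_Icc] at hx
        rw [Finset.mem_insert] at hx'
        rcases hx' with h' | h'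
        · omega
        · exact h'
      · intro hc; exact hma (Finset.mem_insert_of_mem hc)
      · intro hc
        by_cases hb1 : b + 1 = n + 1
        · exact hn1I (by rwa [hb1] at hc)
        · exact hmb (Finset.mem_insert_of_mem hc)
  · rintro (rfl | ⟨a, b, ha1, hab, rfl, hsub, hma, hmb⟩)
    · refine ⟨n + 1, n + 1, by omega, le_refl _, by rw [Finset.Icc_self], ?_, ?_, ?_⟩
      · intro x hx
        rw [Finset.mem_Icc] at hx
        have : x = n + 1 := by omega
        exact this ▸ Finset.mem_insert_self _ _
      · simp only [Finset.mem_insert, not_or]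
        constructor
        · omega
        · intro h; exact hn (by rwa [show n + 1 - 1 = n by omega] at h)
      · simp only [Finset.mem_insert, not_or]
        constructor
        · omega
        · intro h
          have := hI h; rw [Finset.mem_Icc] at this; omega
    · have hbn : b ≤ n := by
        have := hI (hsub (Finset.mem_Icc.2 ⟨hab, le_refl b⟩))
        rw [Finset.mem_Icc] at this; omega
      have hbn' : b ≠ n := by
        intro h
        exact hn (h ▸ hsub (Finset.mem_Icc.2 ⟨hab, le_refl b⟩))
      refine ⟨a, b, ha1, hab, rfl, fun x hx => Finset.mem_insert_of_mem (hsub hx), ?_, ?_⟩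
      · simp only [Finset.mem_insert, not_or]
        exact ⟨by omega, hma⟩
      · simp only [Finset.mem_insert, not_or]
        exact ⟨by omega, hmb⟩

/-- Case `n ∈ I`: runs of `insert (n+1) I`. -/
lemma runs_insert_of_mem {n a : ℕ} {I : Finset ℕ} (hI : I ⊆ Finset.Icc 1 n)
    (ha1 : 1 ≤ a) (han : a ≤ n) (haI : Finset.Icc a n ⊆ I) (hma : a - 1 ∉ I) :
    runs (insert (n + 1) I) = insert (Finset.Icc a (n + 1)) ((runs I).erase (Finset.Icc a n)) := by
  have h0 : 0 ∉ I := zero_notMem_of_subset_Icc hI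
  have h0' : (0 : ℕ) ∉ insert (n + 1) I := by
    simp only [Finset.mem_insert, not_or]
    exact ⟨by omega, h0⟩
  have hn1I : n + 1 ∉ I := fun h => by
    have := hI h; rw [Finset.mem_Icc] at this; omega
  ext R
  rw [mem_runs, Finset.mem_insert, Finset.mem_erase, mem_runs, isRun_iff h0']
  constructor
  · rintro ⟨c, d, hc1, hcd, rfl, hsub, hmc, hmd⟩
    by_cases hd : d = n + 1
    · subst hd
      left
      have hcsub : Finset.Icc c n ⊆ I := by
        intro x hx
        rw [Finset.mem_Icc] at hx
        have := hsub (Finset.mem_Icc.2 ⟨hx.1, by omega⟩)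
        rw [Finset.mem_insert] at this
        rcases this with h' | h'
        · omega
        · exact h'
      have hcn : c ≤ n := by
        by_contra h
        have hc : c = n + 1 := by omega
        subst hc
        exact hmc (by
          rw [Finset.mem_insert]
          right
          rw [show n + 1 - 1 = n by omega]
          exact haI (Finset.mem_Icc.2 ⟨han, le_refl n⟩))
      have hmc' : c - 1 ∉ I := fun h => hmc (Finset.mem_insert_of_mem h)
      have := run_left_unique hc1 ha1 hcn han hcsub haI hmc' hma
      rw [this]
    · right
      have hdn : d ≤ n := by
        have := hsub (Finset.mem_Icc.2 ⟨hcd, le_refl d⟩)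
        rw [Finset.mem_insert] at this
        rcases this with h' | h'
        · omega
        · have := hI h'; rw [Finset.mem_Icc] at this; omega
      have hsubI : Finset.Icc c d ⊆ I := by
        intro x hx
        have hx' := hsub hx
        rw [Finset.mem_Icc] at hx
        rw [Finset.mem_insert] at hx'
        rcases hx' with h' | h'
        · omega
        · exact h'
      have hdn' : d ≠ n := by
        intro h
        subst h
        exact hmd (Finset.mem_insert_self _ _)
      constructor
      · intro hc
        have : n ∈ Finset.Icc c d := hc ▸ Finset.mem_Icc.2 ⟨han, le_refl n⟩
        rw [Finset.mem_Icc] at this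
        omega
      · rw [isRun_iff h0]
        refine ⟨c, d, hc1, hcd, rfl, hsubI, fun h => hmc (Finset.mem_insert_of_mem h), ?_⟩
        intro h
        by_cases hd1 : d + 1 = n + 1
        · omega
        · exact hmd (Finset.mem_insert_of_mem h)
  · rintro (rfl | ⟨hne, hR⟩)
    · refine ⟨a, n + 1, ha1, by omega, rfl, ?_, ?_, ?_⟩
      · intro x hx
        rw [Finset.mem_Icc] at hx
        by_cases hxn : x = n + 1
        · exact hxn ▸ Finset.mem_insert_self _ _
        · exact Finset.mem_insert_of_mem (haI (Finset.mem_Icc.2 ⟨hx.1, by omega⟩))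
      · simp only [Finset.mem_insert, not_or]
        exact ⟨by omega, hma⟩
      · simp only [Finset.mem_insert, not_or]
        constructor
        · omega
        · intro h
          have := hI h; rw [Finset.mem_Icc] at this; omega
    · rw [isRun_iff h0] at hR
      obtain ⟨c, d, hc1, hcd, rfl, hsub, hmc, hmd⟩ := hR
      have hdn : d ≤ n := by
        have := hI (hsub (Finset.mem_Icc.2 ⟨hcd, le_refl d⟩))
        rw [Finset.mem_Icc] at this; omega
      have hdn' : d ≠ n := by
        intro h
        subst h
        have hcn := run_left_unique hc1 ha1 hcd han hsub haI hmc hma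
        exact hne (by rw [hcn])
      refine ⟨c, d, hc1, hcd, rfl, fun x hx => Finset.mem_insert_of_mem (hsub hx), ?_, ?_⟩
      · simp only [Finset.mem_insert, not_or]
        exact ⟨by omega, hmc⟩
      · simp only [Finset.mem_insert, not_or]
        exact ⟨by omega, hmd⟩

end Sec5
section Sec6

lemma filter_top_runs {n a : ℕ} {I : Finset ℕ} (hI : I ⊆ Finset.Icc 1 n)
    (ha1 : 1 ≤ a) (han : a ≤ n) (haI : Finset.Icc a n ⊆ I) (hma : a - 1 ∉ I) :
    (runs I).filter (fun R => n ∉ R) = (runs I).erase (Finset.Icc a n) := by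
  ext R
  simp only [Finset.mem_filter, Finset.mem_erase, mem_runs]
  constructor
  · rintro ⟨hR, hnR⟩
    exact ⟨fun he => hnR (he ▸ Finset.mem_Icc.2 ⟨han, le_refl n⟩), hR⟩
  · rintro ⟨hne, hR⟩
    exact ⟨hR, fun hnR => hne (run_top_eq hI ha1 han haI hma hR hnR)⟩

lemma piFun_insert_top {n : ℕ} {I : Finset ℕ} (hI : I ⊆ Finset.Icc 1 n) :
    piFun (insert (n + 1) I) = piFun I + piFun' n I := by
  have hn1I : n + 1 ∉ I := fun h => by
    have := hI h; rw [Finset.mem_Icc] at this; omega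
  by_cases hn : n ∈ I
  · obtain ⟨a, ha1, han, haI, hma, hrun⟩ := exists_top_run hI hn
    have hRa : Finset.Icc a n ∈ runs I := mem_runs.2 hrun
    have hnotmem : Finset.Icc a (n + 1) ∉ (runs I).erase (Finset.Icc a n) := by
      intro h
      have := run_subset (Finset.mem_of_mem_erase h)
      exact hn1I (this (Finset.mem_Icc.2 ⟨by omega, le_refl _⟩))
    rw [piFun, runs_insert_of_mem hI ha1 han haI hma, Finset.prod_insert hnotmem]
    have hP : piFun I = ((Finset.Icc a n).card + 1)
        * ∏ R ∈ (runs I).erase (Finset.Icc a n), (R.card + 1) :=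
      (Finset.mul_prod_erase _ _ hRa).symm
    have hP' : piFun' n I = ∏ R ∈ (runs I).erase (Finset.Icc a n), (R.card + 1) := by
      rw [piFun', filter_top_runs hI ha1 han haI hma]
    rw [hP, hP', Nat.card_Icc, Nat.card_Icc]
    have he : n + 1 + 1 - a + 1 = (n + 1 - a + 1) + 1 := by omega
    rw [he, Nat.add_mul, Nat.one_mul]
  · have hsingle : ({n + 1} : Finset ℕ) ∉ runs I := by
      intro h
      exact hn1I (run_subset h (Finset.mem_singleton_self _))
    rw [piFun, runs_insert_of_notMem hI hn, Finset.prod_insert hsingle,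
      piFun'_of_notMem hn]
    simp only [Finset.card_singleton]
    rw [← piFun]
    omega

lemma piFun'_insert_top {n : ℕ} {I : Finset ℕ} (hI : I ⊆ Finset.Icc 1 n) :
    piFun' (n + 1) (insert (n + 1) I) = piFun' n I := by
  have hn1I : n + 1 ∉ I := fun h => by
    have := hI h; rw [Finset.mem_Icc] at this; omega
  by_cases hn : n ∈ I
  · obtain ⟨a, ha1, han, haI, hma, hrun⟩ := exists_top_run hI hn
    rw [piFun', runs_insert_of_mem hI ha1 han haI hma, Finset.filter_insert,
      if_neg (by simp; omega)]
    have hfil : Finset.filter (fun R => n + 1 ∉ R) ((runs I).erase (Finset.Icc a n))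
        = (runs I).erase (Finset.Icc a n) := by
      apply Finset.filter_true_of_mem
      intro R hR hc
      exact hn1I (run_subset (Finset.mem_of_mem_erase hR) hc)
    rw [hfil, piFun', filter_top_runs hI ha1 han haI hma]
  · rw [piFun', runs_insert_of_notMem hI hn, Finset.filter_insert,
      if_neg (by simp)]
    have hfil : Finset.filter (fun R => n + 1 ∉ R) (runs I) = runs I := by
      apply Finset.filter_true_of_mem
      intro R hR hc
      exact hn1I (run_subset hR hc)
    rw [hfil, piFun'_of_notMem hn, piFun]

end Sec6
section Sec7

lemma decode_zero (i : Fin (2 ^ 0)) : decode 0 i = ∅ := by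
  rw [decode, show Finset.Icc 1 0 = ∅ from Finset.Icc_eq_empty (by omega), Finset.filter_empty]

lemma runs_empty : runs ∅ = ∅ := by
  ext R
  rw [mem_runs]
  simp only [Finset.notMem_empty, iff_false]
  rintro ⟨⟨x, hx⟩, -, hsub, -⟩
  exact Finset.notMem_empty x (hsub hx)

lemma piFun_empty : piFun ∅ = 1 := by rw [piFun, runs_empty, Finset.prod_empty]

lemma piFun'_empty (m : ℕ) : piFun' m ∅ = 1 := by
  rw [piFun', runs_empty, Finset.filter_empty, Finset.prod_empty]

lemma U_zero (i j : Fin (2 ^ 0)) : U 0 i j = 1 := by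
  simp [U, decode_zero]

lemma V_zero (i j : Fin (2 ^ 0)) : V 0 i j = 1 := by
  simp [V, decode_zero]

lemma A_zero (i j : Fin (2 ^ 0)) : A 0 i j = 1 := by
  simp [A, ABpair]

lemma B_zero (i j : Fin (2 ^ 0)) : B 0 i j = 1 := by
  simp [B, ABpair]

lemma Ap_zero (i j : Fin (2 ^ 0)) : A' 0 i j = 1 := by
  rw [A', Matrix.mul_apply]
  have h : ∀ k : Fin (2 ^ 0), (U 0 * A 0) i k * V 0 k j = 1 := by
    intro k
    rw [Matrix.mul_apply, V_zero, mul_one]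
    have h1 : ∀ l : Fin (2 ^ 0), U 0 i l * A 0 l k = 1 := fun l => by
      rw [U_zero, A_zero, mul_one]
    rw [Finset.sum_congr rfl (fun l _ => h1 l), Finset.sum_const, Finset.card_univ]
    simp
  rw [Finset.sum_congr rfl (fun k _ => h k), Finset.sum_const, Finset.card_univ]
  simp

lemma Bp_zero (i j : Fin (2 ^ 0)) : B' 0 i j = 1 := by
  rw [B', Matrix.mul_apply]
  have h : ∀ k : Fin (2 ^ 0), (U 0 * B 0) i k * V 0 k j = 1 := by
    intro k
    rw [Matrix.mul_apply, V_zero, mul_one]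
    have h1 : ∀ l : Fin (2 ^ 0), U 0 i l * B 0 l k = 1 := fun l => by
      rw [U_zero, B_zero, mul_one]
    rw [Finset.sum_congr rfl (fun l _ => h1 l), Finset.sum_const, Finset.card_univ]
    simp
  rw [Finset.sum_congr rfl (fun k _ => h k), Finset.sum_const, Finset.card_univ]
  simp

lemma main (n : ℕ) (I : Finset ℕ) (hI : I ⊆ Finset.Icc 1 n) :
    A' n (idx n I hI) (idx n (Finset.Icc 1 n \ I) Finset.sdiff_subset) = (piFun I : ℤ) ∧
    B' n (idx n I hI) (idx n (Finset.Icc 1 n \ I) Finset.sdiff_subset) = (piFun' n I : ℤ) := by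
  induction n generalizing I with
  | zero =>
    have hIe : I = ∅ := by
      rw [show Finset.Icc 1 0 = ∅ from Finset.Icc_eq_empty (by omega)] at hI
      exact Finset.subset_empty.1 hI
    subst hIe
    rw [Ap_zero, Bp_zero, piFun_empty, piFun'_empty]
    simp
  | succ n ih =>
    by_cases hmem : n + 1 ∈ I
    · -- n+1 ∈ I : bottom-left blocks
      have hI' : I.erase (n + 1) ⊆ Finset.Icc 1 n := erase_subset_Icc hI
      have hcol : Finset.Icc 1 (n + 1) \ I = Finset.Icc 1 n \ I.erase (n + 1) := by
        ext x
        simp only [Finset.mem_sdiff, Finset.mem_Icc, Finset.mem_erase]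
        constructor
        · rintro ⟨⟨h1, h2⟩, h3⟩
          have hx : x ≠ n + 1 := fun he => h3 (he ▸ hmem)
          exact ⟨⟨h1, by omega⟩, fun hc => h3 hc.2⟩
        · rintro ⟨⟨h1, h2⟩, h3⟩
          exact ⟨⟨h1, by omega⟩, fun hc => h3 ⟨by omega, hc⟩⟩
      have hcolsub : Finset.Icc 1 n \ I.erase (n + 1) ⊆ Finset.Icc 1 (n + 1) :=
        Finset.sdiff_subset.trans (Finset.Icc_subset_Icc_right (by omega))
      have hcolsub' : Finset.Icc 1 n \ I.erase (n + 1) ⊆ Finset.Icc 1 n := Finset.sdiff_subset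
      have hrow := idx_inr hI hmem
      have hcoleq : idx (n + 1) (Finset.Icc 1 (n + 1) \ I) Finset.sdiff_subset
          = (blockEquiv n) (Sum.inl (idx n (Finset.Icc 1 n \ I.erase (n + 1)) hcolsub')) := by
        rw [idx_congr hcol Finset.sdiff_subset hcolsub, idx_inl hcolsub hcolsub']
      obtain ⟨ihA, ihB⟩ := ih (I.erase (n + 1)) hI'
      have hins : insert (n + 1) (I.erase (n + 1)) = I := Finset.insert_erase hmem
      have hpi : piFun I = piFun (I.erase (n + 1)) + piFun' n (I.erase (n + 1)) := by
        conv_lhs => rw [← hins]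
        exact piFun_insert_top hI'
      have hpi' : piFun' (n + 1) I = piFun' n (I.erase (n + 1)) := by
        conv_lhs => rw [← hins]
        exact piFun'_insert_top hI'
      rw [hrow, hcoleq, Ap_succ, Bp_succ, Matrix.reindex_apply, Matrix.reindex_apply,
        Matrix.submatrix_apply, Matrix.submatrix_apply, Equiv.symm_apply_apply,
        Equiv.symm_apply_apply, Matrix.fromBlocks_apply₂₁, Matrix.fromBlocks_apply₂₁]
      constructor
      · rw [Matrix.add_apply]
        have hA := ihA
        have hB := ihB
        rw [idx_congr (rfl : Finset.Icc 1 n \ I.erase (n + 1) = _) hcolsub' Finset.sdiff_subset]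
        rw [hA, hB, hpi]
        push_cast
        ring
      · rw [idx_congr (rfl : Finset.Icc 1 n \ I.erase (n + 1) = _) hcolsub' Finset.sdiff_subset]
        rw [ihB, hpi']
    · -- n+1 ∉ I : top-right blocks
      have hI'' : I ⊆ Finset.Icc 1 n := subset_Icc_of_not_mem hI hmem
      have hmemC : n + 1 ∈ Finset.Icc 1 (n + 1) \ I :=
        Finset.mem_sdiff.2 ⟨Finset.mem_Icc.2 ⟨by omega, le_refl _⟩, hmem⟩
      have hCerase : (Finset.Icc 1 (n + 1) \ I).erase (n + 1) = Finset.Icc 1 n \ I := by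
        ext x
        simp only [Finset.mem_erase, Finset.mem_sdiff, Finset.mem_Icc]
        constructor
        · rintro ⟨h1, ⟨h2, h3⟩, h4⟩
          exact ⟨⟨h2, by omega⟩, h4⟩
        · rintro ⟨⟨h1, h2⟩, h3⟩
          exact ⟨by omega, ⟨h1, by omega⟩, h3⟩
      have hrow := idx_inl hI hI''
      have hcoleq : idx (n + 1) (Finset.Icc 1 (n + 1) \ I) Finset.sdiff_subset
          = (blockEquiv n) (Sum.inr (idx n (Finset.Icc 1 n \ I) Finset.sdiff_subset)) := by
        rw [idx_inr Finset.sdiff_subset hmemC]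
        congr 1
        congr 1
        exact idx_congr hCerase (erase_subset_Icc Finset.sdiff_subset) Finset.sdiff_subset
      obtain ⟨ihA, ihB⟩ := ih I hI''
      rw [hrow, hcoleq, Ap_succ, Bp_succ, Matrix.reindex_apply, Matrix.reindex_apply,
        Matrix.submatrix_apply, Matrix.submatrix_apply, Equiv.symm_apply_apply,
        Equiv.symm_apply_apply, Matrix.fromBlocks_apply₁₂, Matrix.fromBlocks_apply₁₂]
      rw [ihA, piFun'_of_notMem hmem]
      exact ⟨rfl, rfl⟩

end Sec7

theorem stmt13 (n : ℕ) (hn : 1 ≤ n) (I : Finset ℕ) (hI : I ⊆ Finset.Icc 1 n) :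
    B' n (idx n I hI) (idx n (Finset.Icc 1 n \ I) Finset.sdiff_subset) = (piFun' n I : ℤ) :=
  (main n I hI).2

end AR
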